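/- arXiv:1301.3991 — 3 statements merged into one kernel-verified Lean document; each statement's English description precedes it below -/
import Mathlib

section
/- Let C = {C_1,...,C_t} be a characteristic set of a parametric system P in K[U][X], i.e., C ⊂ ⟨P⟩_{K[U][X]} and the successive pseudo-remainder prem(p, C) = 0 for all p ∈ P. Then for any a ∈ K̄^d, V(P(a)) = V(C(a) \ I_C(a)) ∪ ⋃_{i=1}^t V(P(a) ∪ C(a) ∪ {I_{C_i}(a)}), where I_C = ∏_{i=1}^t I_{C_i} and V(S \ g) denotes V(S) minus V(g). -/
open MvPolynomial

noncomputable section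

variable {K : Type*} [Field K] {d n : ℕ}

/-- Specialization of parameters: `K[U][X] → K̄[X]` substituting `a` for `U`. -/
def specAt (a : Fin d → AlgebraicClosure K) :
    MvPolynomial (Fin n) (MvPolynomial (Fin d) K) →+*
      MvPolynomial (Fin n) (AlgebraicClosure K) :=
  MvPolynomial.map ((MvPolynomial.aeval a).toRingHom)

/-- Common zero set in `K̄ⁿ` of the specializations at `a` of a set of polynomials. -/
def zeroSetAt (a : Fin d → AlgebraicClosure K)
    (S : Set (MvPolynomial (Fin n) (MvPolynomial (Fin d) K))) :
    Set (Fin n → AlgebraicClosure K) :=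
  {x | ∀ f ∈ S, MvPolynomial.eval x (specAt a f) = 0}

variable {A : Type*} [CommRing A]

/-- The main (largest) variable of a multivariate polynomial (defaults to `0`). -/
def mainVar [NeZero n] (F : MvPolynomial (Fin n) A) : Fin n := WithBot.unbotD 0 F.vars.max

/-- The initial of `F`: its leading coefficient w.r.t. its main variable. -/
def initial [NeZero n] (F : MvPolynomial (Fin n) A) : MvPolynomial (Fin n) A :=
  ∑ m ∈ F.support.filter (fun m => m (mainVar F) = F.degreeOf (mainVar F)),
    MvPolynomial.monomial (m - Finsupp.single (mainVar F) (F.degreeOf (mainVar F))) (F.coeff m)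

/-- `F` viewed as a univariate polynomial in the variable `j`. -/
def toUniv (j : Fin n) (F : MvPolynomial (Fin n) A) :
    Polynomial (MvPolynomial (Fin n) A) :=
  ∑ m ∈ F.support,
    Polynomial.monomial (m j) (MvPolynomial.monomial (m - Finsupp.single j (m j)) (F.coeff m))

/-- The Sylvester matrix of two univariate polynomials. -/
def sylvester (f g : Polynomial A) :
    Matrix (Fin (f.natDegree + g.natDegree)) (Fin (f.natDegree + g.natDegree)) A :=
  fun i j =>
    if (i : ℕ) < g.natDegree then
      (if (i : ℕ) ≤ (j : ℕ) ∧ (j : ℕ) ≤ (i : ℕ) + f.natDegree then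
        f.coeff (f.natDegree + i - j) else 0)
    else
      (if (i : ℕ) - g.natDegree ≤ (j : ℕ) ∧ (j : ℕ) ≤ ((i : ℕ) - g.natDegree) + g.natDegree then
        g.coeff (g.natDegree + ((i : ℕ) - g.natDegree) - j) else 0)

/-- The resultant of two univariate polynomials (Sylvester determinant). -/
def resultant (f g : Polynomial A) : A := (sylvester f g).det

/-- `res(F, P)`: resultant w.r.t. the main variable of `P`. -/
def res1 [NeZero n] (F P : MvPolynomial (Fin n) A) : MvPolynomial (Fin n) A :=
  resultant (toUniv (mainVar P) F) (toUniv (mainVar P) P)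

/-- Successive resultant of `F` w.r.t. the list `l` of polynomials. -/
def sres [NeZero n] (F : MvPolynomial (Fin n) A) (l : List (MvPolynomial (Fin n) A)) :
    MvPolynomial (Fin n) A :=
  l.foldl res1 F

/-- A triangular set: the main variables are strictly increasing. -/
def IsTriangular [NeZero n] {r : ℕ} (T : Fin r → MvPolynomial (Fin n) A) : Prop :=
  (∀ i, (T i).vars.Nonempty) ∧ StrictMono (fun i => mainVar (T i))

/-- A regular chain. -/
def IsRegularChain [NeZero n] {r : ℕ} (T : Fin r → MvPolynomial (Fin n) A) : Prop :=
  IsTriangular T ∧ (∀ i : Fin r, (i : ℕ) = 0 → initial (T i) ≠ 0) ∧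
    ∀ i : Fin r, 0 < (i : ℕ) →
      sres (initial (T i)) ((List.ofFn T).take i).reverse ≠ 0

section ZeroSet

variable (a : Fin d → AlgebraicClosure K)

theorem mem_zeroSetAt_iff_subset_ker {S : Set (MvPolynomial (Fin n) (MvPolynomial (Fin d) K))}
    {x : Fin n → AlgebraicClosure K} :
    x ∈ zeroSetAt a S ↔ S ⊆ RingHom.ker ((eval x).comp (specAt a)) :=
  Iff.rfl

theorem mem_zeroSetAt_singleton {f : MvPolynomial (Fin n) (MvPolynomial (Fin d) K)}
    {x : Fin n → AlgebraicClosure K} :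
    x ∈ zeroSetAt a {f} ↔ eval x (specAt a f) = 0 := by
  simp [zeroSetAt]

theorem zeroSetAt_anti_mono {S T : Set (MvPolynomial (Fin n) (MvPolynomial (Fin d) K))}
    (h : S ⊆ T) : zeroSetAt a T ⊆ zeroSetAt a S :=
  fun _ hx f hf => hx f (h hf)

theorem zeroSetAt_union (S T : Set (MvPolynomial (Fin n) (MvPolynomial (Fin d) K))) :
    zeroSetAt a (S ∪ T) = zeroSetAt a S ∩ zeroSetAt a T := by
  ext x
  simp only [mem_zeroSetAt_iff_subset_ker, Set.union_subset_iff, Set.mem_inter_iff]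

theorem zeroSetAt_span (S : Set (MvPolynomial (Fin n) (MvPolynomial (Fin d) K))) :
    zeroSetAt a (Ideal.span S : Set _) = zeroSetAt a S := by
  ext x
  simp only [mem_zeroSetAt_iff_subset_ker, SetLike.coe_subset_coe, Ideal.span_le]

theorem zeroSetAt_singleton_prod {ι : Type*} (s : Finset ι)
    (f : ι → MvPolynomial (Fin n) (MvPolynomial (Fin d) K)) :
    zeroSetAt a {∏ i ∈ s, f i} = ⋃ i ∈ s, zeroSetAt a {f i} := by
  ext x
  simp only [mem_zeroSetAt_singleton, map_prod, Finset.prod_eq_zero_iff, Set.mem_iUnion₂,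
    exists_prop]

end ZeroSet

variable {ι : Type*} [Fintype ι]

theorem zeroSetAt_diff_subset_of_prod_pow_mul_mem_span (a : Fin d → AlgebraicClosure K)
    (P : Set (MvPolynomial (Fin n) (MvPolynomial (Fin d) K)))
    (C I : ι → MvPolynomial (Fin n) (MvPolynomial (Fin d) K))
    (hprem : ∀ p ∈ P, ∃ k : ι → ℕ, (∏ i, I i ^ k i) * p ∈ Ideal.span (Set.range C)) :
    zeroSetAt a (Set.range C) \ zeroSetAt a {∏ i, I i} ⊆ zeroSetAt a P := by
  rintro x ⟨hC, hI⟩ p hp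
  obtain ⟨k, hk⟩ := hprem p hp
  have hzero : eval x (specAt a ((∏ i, I i ^ k i) * p)) = 0 := by
    rw [← zeroSetAt_span] at hC
    exact hC _ hk
  have hunit : eval x (specAt a (∏ i, I i ^ k i)) ≠ 0 := by
    rw [zeroSetAt_singleton_prod, Set.mem_iUnion₂] at hI
    push Not at hI
    simp only [map_prod, map_pow]
    exact Finset.prod_ne_zero_iff.mpr fun i hi =>
      pow_ne_zero _ fun h => hI i hi (mem_zeroSetAt_singleton a |>.mpr h)
  rw [map_mul, map_mul] at hzero
  exact (mul_eq_zero.mp hzero).resolve_left hunit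

theorem zeroSetAt_eq_diff_union_iUnion (a : Fin d → AlgebraicClosure K)
    (P : Set (MvPolynomial (Fin n) (MvPolynomial (Fin d) K)))
    (C I : ι → MvPolynomial (Fin n) (MvPolynomial (Fin d) K))
    (hCP : ∀ i, C i ∈ Ideal.span P)
    (hprem : ∀ p ∈ P, ∃ k : ι → ℕ, (∏ i, I i ^ k i) * p ∈ Ideal.span (Set.range C)) :
    zeroSetAt a P =
      (zeroSetAt a (Set.range C) \ zeroSetAt a {∏ i, I i}) ∪
        ⋃ i, zeroSetAt a (P ∪ Set.range C ∪ {I i}) := by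
  have hPC : zeroSetAt a P ⊆ zeroSetAt a (Set.range C) :=
    zeroSetAt_span a P ▸ zeroSetAt_anti_mono a (Set.range_subset_iff.mpr hCP)
  have hsplit : ⋃ i, zeroSetAt a (P ∪ Set.range C ∪ {I i}) =
      zeroSetAt a P ∩ zeroSetAt a {∏ i, I i} := by
    simp only [zeroSetAt_union, zeroSetAt_singleton_prod, Finset.mem_univ, Set.iUnion_true,
      ← Set.inter_iUnion, Set.inter_eq_left.mpr hPC]
  rw [hsplit]
  refine Set.Subset.antisymm (fun x hx => ?_) <| Set.union_subset
    (zeroSetAt_diff_subset_of_prod_pow_mul_mem_span a P C I hprem) Set.inter_subset_left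
  by_cases hI : x ∈ zeroSetAt a {∏ i, I i}
  · exact Or.inr ⟨hx, hI⟩
  · exact Or.inl ⟨hPC hx, hI⟩

theorem stmt3_general [NeZero n] {t : ℕ}
    (P : Set (MvPolynomial (Fin n) (MvPolynomial (Fin d) K)))
    (C : Fin t → MvPolynomial (Fin n) (MvPolynomial (Fin d) K))
    (hCP : ∀ i, C i ∈ Ideal.span P)
    (hprem : ∀ p ∈ P, ∃ k : Fin t → ℕ,
      (∏ i, initial (C i) ^ k i) * p ∈ Ideal.span (Set.range C)) :
    ∀ a : Fin d → AlgebraicClosure K,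
      zeroSetAt a P =
        (zeroSetAt a (Set.range C) \ zeroSetAt a {∏ i, initial (C i)}) ∪
          ⋃ i, zeroSetAt a (P ∪ Set.range C ∪ {initial (C i)}) :=
  fun a => zeroSetAt_eq_diff_union_iUnion a P C (fun i => initial (C i)) hCP hprem

/-- Lemma wuset: If `C = {C_1,...,C_t}` is a characteristic set of `P` (i.e.
`C ⊆ ⟨P⟩` and every `p ∈ P` pseudo-reduces to zero modulo `C`), then for every `a ∈ K̄^d`,
`V(P(a)) = (V(C(a)) \ V(I_C(a))) ∪ ⋃_i V(P(a) ∪ C(a) ∪ {I_{C_i}(a)})`. -/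
theorem stmt3 [NeZero n] {t : ℕ}
    (P : Set (MvPolynomial (Fin n) (MvPolynomial (Fin d) K))) (hPfin : P.Finite)
    (C : Fin t → MvPolynomial (Fin n) (MvPolynomial (Fin d) K))
    (hTri : IsTriangular C)
    (hCP : ∀ i, C i ∈ Ideal.span P)
    (hprem : ∀ p ∈ P, ∃ k : Fin t → ℕ,
      (∏ i, initial (C i) ^ k i) * p ∈ Ideal.span (Set.range C)) :
    ∀ a : Fin d → AlgebraicClosure K,
      zeroSetAt a P =
        (zeroSetAt a (Set.range C) \ zeroSetAt a {∏ i, initial (C i)}) ∪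
          ⋃ i, zeroSetAt a (P ∪ Set.range C ∪ {initial (C i)}) :=
  stmt3_general P C hCP hprem

end
end

section
/- Let P be a parametric system in K[U][X] with a line {C_{l,1},...,C_{l,k}} of a Wu's decomposition, with corresponding systems {P_1,...,P_k} where P_1 = P and P_i = P_{i-1} ∪ C_{l,i-1} ∪ {I_{C_{l,i-1}}}. Then for any a ∈ K̄^d not in V^U(C_{l,k}), for each i (1 ≤ i ≤ k) there exists a polynomial p_i ∈ P_i such that p_i(a) is not identically zero. -/
open MvPolynomial

noncomputable section

variable {K : Type*} [Field K] {d n : ℕ}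

variable {A : Type*} [CommRing A]

/-!
If every element of `P_i` vanished at `a`, so would every element of the ideal it generates,
hence the characteristic set `C_{l,i}` and the initial of any of its elements, i.e. all of
`P_{i+1}`. Propagating along the line, the constant `F ∈ ⟨P_k⟩` would vanish at `a`.
-/

theorem map_initial_eq_zero {B : Type*} [CommRing B] [NeZero n] (f : A →+* B)
    {p : MvPolynomial (Fin n) A} (hp : map f p = 0) : map f (initial p) = 0 := by
  have hcoeff : ∀ m, f (p.coeff m) = 0 := fun m => by
    simpa only [coeff_map, coeff_zero] using congrArg (coeff m) hp
  rw [initial, map_sum]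
  exact Finset.sum_eq_zero fun m _ => by rw [map_monomial, hcoeff, monomial_zero]

theorem RingHom.eq_zero_of_mem_span {R S : Type*} [CommSemiring R] [Semiring S] (φ : R →+* S)
    {s : Set R} (hs : ∀ p ∈ s, φ p = 0) {q : R} (hq : q ∈ Ideal.span s) : φ q = 0 :=
  Ideal.span_le.mpr (show s ⊆ RingHom.ker φ from hs) hq

theorem map_eq_zero_of_mem_union_initial {B : Type*} [CommRing B] [NeZero n] (f : A →+* B)
    {P C : Set (MvPolynomial (Fin n) A)}
    {c : MvPolynomial (Fin n) A} (hchar : C ⊆ Ideal.span P) (hc : c ∈ C)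
    (hP : ∀ p ∈ P, map f p = 0) : ∀ p ∈ P ∪ C ∪ {initial c}, map f p = 0 := by
  have hspan : ∀ q ∈ Ideal.span P, map f q = 0 := fun q => (map f).eq_zero_of_mem_span hP
  rintro p ((hp | hp) | rfl)
  · exact hP p hp
  · exact hspan p (hchar hp)
  · exact map_initial_eq_zero f (hspan c (hchar hc))

theorem specAt_C (a : Fin d → AlgebraicClosure K) (b : MvPolynomial (Fin d) K) :
    specAt (n := n) a (MvPolynomial.C b) = MvPolynomial.C (aeval a b) :=
  map_C _ _

theorem stmt7_general [NeZero n] (k : ℕ)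
    (P : ℕ → Set (MvPolynomial (Fin n) (MvPolynomial (Fin d) K)))
    (C : ℕ → Finset (MvPolynomial (Fin n) (MvPolynomial (Fin d) K)))
    (c : ℕ → MvPolynomial (Fin n) (MvPolynomial (Fin d) K))
    (hchar : ∀ i, i + 1 < k → ((C i : Finset (MvPolynomial (Fin n) (MvPolynomial (Fin d) K))) : Set (MvPolynomial (Fin n) (MvPolynomial (Fin d) K))) ⊆ (Ideal.span (P i) : Set (MvPolynomial (Fin n) (MvPolynomial (Fin d) K))))
    (hc : ∀ i, i + 1 < k → c i ∈ C i)
    (hstep : ∀ i, i + 1 < k → P (i + 1) = P i ∪ ↑(C i) ∪ {initial (c i)})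
    (b : MvPolynomial (Fin d) K)
    (hlast : MvPolynomial.C b ∈ Ideal.span (P (k - 1)))
    (a : Fin d → AlgebraicClosure K) (ha : MvPolynomial.aeval a b ≠ 0) :
    ∀ i < k, ∃ p ∈ P i, specAt a p ≠ 0 := by
  intro i hi
  by_contra! hvanish
  have hline : ∀ j, i ≤ j → j < k → ∀ p ∈ P j, specAt a p = 0 := by
    intro j hij
    induction j, hij using Nat.le_induction with
    | base => exact fun _ => hvanish
    | succ j _ ih =>
      intro hj
      rw [hstep j hj]
      exact map_eq_zero_of_mem_union_initial _ (hchar j hj) (hc j hj) (ih (by omega))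
  have hCb : specAt a (MvPolynomial.C b) = 0 :=
    (specAt a).eq_zero_of_mem_span (hline (k - 1) (by omega) (by omega)) hlast
  rw [specAt_C, C_eq_zero] at hCb
  exact ha hCb

/-- Lemma wusinit: Along a line `C_{l,1},...,C_{l,k}` of a Wu's decomposition of
`P = P_1` with corresponding systems `P_i` (`P_{i+1} = P_i ∪ C_{l,i} ∪ {I_{C_{l,i}}}`), ending at a
contradictory ascending chain `{C b}`, every `a ∈ K̄^d` outside `V^U({C b})` admits, for each
`i ≤ k`, some `p_i ∈ P_i` whose specialization `p_i(a)` is not identically zero. -/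
theorem stmt7 [NeZero n] (k : ℕ) (hk : 0 < k)
    (P : ℕ → Set (MvPolynomial (Fin n) (MvPolynomial (Fin d) K)))
    (C : ℕ → Finset (MvPolynomial (Fin n) (MvPolynomial (Fin d) K)))
    (c : ℕ → MvPolynomial (Fin n) (MvPolynomial (Fin d) K))
    (hchar : ∀ i, i + 1 < k → ((C i : Finset (MvPolynomial (Fin n) (MvPolynomial (Fin d) K))) : Set (MvPolynomial (Fin n) (MvPolynomial (Fin d) K))) ⊆ (Ideal.span (P i) : Set (MvPolynomial (Fin n) (MvPolynomial (Fin d) K))))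
    (hc : ∀ i, i + 1 < k → c i ∈ C i)
    (hstep : ∀ i, i + 1 < k → P (i + 1) = P i ∪ ↑(C i) ∪ {initial (c i)})
    (b : MvPolynomial (Fin d) K) (hb : b ≠ 0)
    (hlastC : C (k - 1) = {MvPolynomial.C b})
    (hlast : MvPolynomial.C b ∈ Ideal.span (P (k - 1)))
    (a : Fin d → AlgebraicClosure K) (ha : MvPolynomial.aeval a b ≠ 0) :
    ∀ i < k, ∃ p ∈ P i, specAt a p ≠ 0 :=
  stmt7_general k P C c hchar hc hstep b hlast a ha

end
end

section
/- Let T = {T_1,...,T_r} be a regular chain in K[U][X] and H ∈ K[U][X] with res(H, T) ≠ 0 (so [T, H] is a regular system). Then the set V_{K̄(U)}(T \ H), i.e., the common zeros of T in the algebraic closure of K(U) at which H does not vanish, is nonempty. -/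
/-!
The zero is built one coordinate at a time, by induction on the length of the chain, carrying a
finite list of polynomials that must not vanish. Given a zero `x'` of `T₁, …, T_{r-1}` at which
the initial of `T_r` and the resultants `res(H, T_r)` do not vanish, `T_r(x', X_c)` (with `X_c`
the main variable of `T_r`) is a nonconstant univariate polynomial over an algebraically closed
field, so it has a root `α`. The Sylvester matrix of two univariate polynomials kills the vector
of powers of any common root, so `res(H, T_r)` vanishes at `x'` whenever `H` vanishes at `x'`
updated by `α`. The induction hypothesis applies to the list `I_{T_r}, res(H, T_r)` because the
regular chain condition and `res(H, T) ≠ 0` say that their successive resultants with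
`T_{r-1}, …, T₁` are nonzero.
-/

open MvPolynomial

noncomputable section

variable {K : Type*} [Field K] {d n : ℕ}

variable {A : Type*} [CommRing A]

/-- Evaluation of `F ∈ K[U][X]` at a point of `\overline{K(U)}ⁿ`. -/
def evalGeneric (x : Fin n → AlgebraicClosure (FractionRing (MvPolynomial (Fin d) K)))
    (F : MvPolynomial (Fin n) (MvPolynomial (Fin d) K)) :
    AlgebraicClosure (FractionRing (MvPolynomial (Fin d) K)) :=
  MvPolynomial.eval x (MvPolynomial.map
    ((algebraMap (FractionRing (MvPolynomial (Fin d) K))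
        (AlgebraicClosure (FractionRing (MvPolynomial (Fin d) K)))).comp
      (algebraMap (MvPolynomial (Fin d) K) (FractionRing (MvPolynomial (Fin d) K)))) F)

section Resultant

variable {R B : Type*} [CommRing R] [CommRing B]

/-- Row `i < g.natDegree` of `sylvester f g`, applied to the vector `(α ^ (N - 1 - j))ⱼ`. -/
lemma sum_sylvesterRow_mul_pow (ψ : R →+* B) (f : Polynomial R) (α : B) {i N : ℕ}
    (hiN : i + f.natDegree + 1 ≤ N) :
    ∑ j : Fin N,
      (if i ≤ j ∧ (j : ℕ) ≤ i + f.natDegree then ψ (f.coeff (f.natDegree + i - j)) else 0)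
        * α ^ (N - 1 - j) = α ^ (N - 1 - i - f.natDegree) * (f.map ψ).eval α := by
  rw [Fin.sum_univ_eq_sum_range (fun j => (if i ≤ j ∧ j ≤ i + f.natDegree then
      ψ (f.coeff (f.natDegree + i - j)) else 0) * α ^ (N - 1 - j)),
    Polynomial.eval_eq_sum_range' (Polynomial.natDegree_map_le.trans_lt (Nat.lt_succ_self _)),
    Finset.mul_sum]
  simp only [ite_mul, zero_mul, ← Finset.sum_filter, Polynomial.coeff_map]
  refine Finset.sum_nbij' (fun j => f.natDegree + i - j) (fun t => f.natDegree + i - t)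
    ?_ ?_ ?_ ?_ ?_ <;> intro j hj <;>
    simp only [Finset.mem_filter, Finset.mem_range] at hj ⊢
  all_goals try omega
  rw [mul_left_comm, ← pow_add]
  congr 2
  omega

lemma map_resultant_eq_zero_of_eval_eq_zero (ψ : R →+* B) {f g : Polynomial R}
    (hfg : 0 < f.natDegree + g.natDegree) {α : B}
    (hf : (f.map ψ).eval α = 0) (hg : (g.map ψ).eval α = 0) :
    ψ (resultant f g) = 0 := by
  set N := f.natDegree + g.natDegree
  have hkernel :
      (ψ.mapMatrix (sylvester f g)).mulVec (fun j : Fin N => α ^ (N - 1 - (j : ℕ))) = 0 := by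
    funext i
    simp only [Matrix.mulVec, dotProduct, RingHom.mapMatrix_apply, Matrix.map_apply, sylvester,
      apply_ite ψ, map_zero, Pi.zero_apply]
    split_ifs with hi
    · rw [sum_sylvesterRow_mul_pow ψ f α (by omega), hf, mul_zero]
    · rw [sum_sylvesterRow_mul_pow ψ g α (by omega), hg, mul_zero]
  rw [resultant, RingHom.map_det]
  -- the last entry of the kernel vector is `α ^ 0 = 1`
  exact Matrix.det_eq_zero_of_mulVec_eq_zero_of_mem_nonZeroDivisors hkernel
    (i := ⟨N - 1, by omega⟩) (by simp)

end Resultant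

section MainVariable

variable {R B : Type*} [CommRing R] [CommRing B]

lemma eval₂_update_eq_eval_toUniv (φ : R →+* B) (x : Fin n → B) (c : Fin n) (α : B)
    (F : MvPolynomial (Fin n) R) :
    eval₂ φ (Function.update x c α) F = ((toUniv c F).map (eval₂Hom φ x)).eval α := by
  rw [Polynomial.eval_map, toUniv, Polynomial.eval₂_finsetSum, eval₂_eq]
  refine Finset.sum_congr rfl fun m _ => ?_
  have herase : m - Finsupp.single c (m c) = m.erase c := by
    ext i
    rcases eq_or_ne i c with rfl | h
    · simp
    · simp [Ne.symm h, Finsupp.erase_ne h]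
  have hprod : (m.erase c).prod (fun i k => Function.update x c α i ^ k)
      = (m.erase c).prod (fun i k => x i ^ k) :=
    Finsupp.prod_congr fun i hi => by
      rw [Finsupp.support_erase] at hi
      rw [Function.update_of_ne (Finset.ne_of_mem_erase hi)]
  rw [Polynomial.eval₂_monomial, eval₂Hom_monomial, herase, ← Finsupp.prod,
    ← Finsupp.mul_prod_erase' m c _ (fun _ => pow_zero _), hprod, Function.update_self]
  ring

lemma one_le_degreeOf_of_mem_vars {F : MvPolynomial (Fin n) R} {c : Fin n} (h : c ∈ F.vars) :
    1 ≤ F.degreeOf c := by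
  obtain ⟨m, hm, hcm⟩ := (mem_vars_iff_mem_support c).mp h
  exact (Nat.one_le_iff_ne_zero.mpr (Finsupp.mem_support_iff.mp hcm)).trans
    (monomial_le_degreeOf c hm)

variable [NeZero n]

lemma mainVar_mem_vars {F : MvPolynomial (Fin n) R} (h : F.vars.Nonempty) :
    mainVar F ∈ F.vars := by
  rw [mainVar, ← Finset.coe_max' h, WithBot.unbotD_coe]
  exact F.vars.max'_mem h

lemma le_mainVar_of_mem_vars {F : MvPolynomial (Fin n) R} {v : Fin n} (hv : v ∈ F.vars) :
    v ≤ mainVar F := by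
  rw [mainVar, ← Finset.coe_max' ⟨v, hv⟩, WithBot.unbotD_coe]
  exact F.vars.le_max' v hv

lemma coeff_toUniv_mainVar_degreeOf (F : MvPolynomial (Fin n) R) :
    (toUniv (mainVar F) F).coeff (F.degreeOf (mainVar F)) = initial F := by
  rw [toUniv, Polynomial.finsetSum_coeff, initial, Finset.sum_filter]
  refine Finset.sum_congr rfl fun m _ => ?_
  rw [Polynomial.coeff_monomial]
  split_ifs with h
  · rw [h]
  · rfl

lemma one_le_natDegree_map_toUniv_mainVar (ψ : MvPolynomial (Fin n) R →+* B)
    {P : MvPolynomial (Fin n) R} (hP : P.vars.Nonempty) (hI : ψ (initial P) ≠ 0) :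
    1 ≤ ((toUniv (mainVar P) P).map ψ).natDegree :=
  (one_le_degreeOf_of_mem_vars (mainVar_mem_vars hP)).trans <|
    Polynomial.le_natDegree_of_ne_zero <| by
      rwa [Polynomial.coeff_map, coeff_toUniv_mainVar_degreeOf]

end MainVariable

section RegularChain

lemma List.take_ofFn_succ_of_le {α : Type*} {r k : ℕ} (T : Fin (r + 1) → α) (hk : k ≤ r) :
    (List.ofFn T).take k = (List.ofFn fun i : Fin r => T i.castSucc).take k := by
  rw [List.ofFn_succ', List.concat_eq_append, List.take_append_of_le_length (by simpa using hk)]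

variable {R : Type*} [CommRing R] [NeZero n] {r : ℕ}

lemma sres_ofFn_reverse_succ (F : MvPolynomial (Fin n) R)
    (T : Fin (r + 1) → MvPolynomial (Fin n) R) :
    sres F (List.ofFn T).reverse
      = sres (res1 F (T (Fin.last r))) (List.ofFn fun i : Fin r => T i.castSucc).reverse := by
  rw [List.ofFn_succ', List.concat_eq_append, List.reverse_concat]
  rfl

namespace IsRegularChain

variable {T : Fin (r + 1) → MvPolynomial (Fin n) R}

lemma castSucc (hT : IsRegularChain T) : IsRegularChain fun i : Fin r => T i.castSucc := by
  obtain ⟨⟨hvars, hmono⟩, hinit₀, hinit⟩ := hT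
  refine ⟨⟨fun i => hvars _, hmono.comp Fin.strictMono_castSucc⟩, fun i hi => hinit₀ _ hi,
    fun i hi => ?_⟩
  have h := hinit i.castSucc hi
  rwa [Fin.val_castSucc, List.take_ofFn_succ_of_le T i.isLt.le] at h

lemma sres_initial_last_ne_zero (hT : IsRegularChain T) :
    sres (initial (T (Fin.last r))) (List.ofFn fun i : Fin r => T i.castSucc).reverse ≠ 0 := by
  rcases r.eq_zero_or_pos with rfl | hr
  · simpa [sres] using hT.2.1 (Fin.last 0) rfl
  · have h := hT.2.2 (Fin.last r) hr
    rwa [Fin.val_last, List.take_ofFn_succ_of_le T le_rfl, List.take_of_length_le (by simp)] at h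

lemma mainVar_last_notMem_vars (hT : IsRegularChain T) (i : Fin r) :
    mainVar (T (Fin.last r)) ∉ (T i.castSucc).vars :=
  fun h => (le_mainVar_of_mem_vars h).not_gt (hT.1.2 (Fin.castSucc_lt_last i))

end IsRegularChain

end RegularChain

section Zeros

variable {R L : Type*} [CommRing R] [Field L]

lemma exists_forall_eval₂_ne_zero [Infinite L] (φ : R →+* L) (hφ : Function.Injective φ)
    (Hs : List (MvPolynomial (Fin n) R)) (hHs : ∀ H ∈ Hs, H ≠ 0) :
    ∃ x : Fin n → L, ∀ H ∈ Hs, eval₂ φ x H ≠ 0 := by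
  have hprod : (Hs.map (map φ)).prod ≠ 0 :=
    List.prod_ne_zero fun h0 => by
      obtain ⟨H, hH, h⟩ := List.mem_map.mp h0
      exact hHs H hH (map_injective φ hφ (by rw [h, map_zero]))
  obtain ⟨x, hx⟩ : ∃ x : Fin n → L, eval x (Hs.map (map φ)).prod ≠ 0 := by
    by_contra! h
    exact hprod (funext fun x => by rw [h x, map_zero])
  refine ⟨x, fun H hH h0 => hx ?_⟩
  rw [map_list_prod, List.map_map]
  exact List.prod_eq_zero (List.mem_map.mpr ⟨H, hH, by rwa [Function.comp_apply, eval_map]⟩)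

lemma eval₂_update_of_notMem_vars {B : Type*} [CommRing B] (φ : R →+* B) (x : Fin n → B)
    {c : Fin n} (α : B) {F : MvPolynomial (Fin n) R} (hc : c ∉ F.vars) :
    eval₂ φ (Function.update x c α) F = eval₂ φ x F :=
  eval₂Hom_congr' rfl (fun _ hi _ => Function.update_of_ne (ne_of_mem_of_not_mem hi hc) _ _) rfl

variable [NeZero n]

lemma eval₂_res1_eq_zero_of_eval₂_update {B : Type*} [CommRing B] (φ : R →+* B)
    (x : Fin n → B) {P F : MvPolynomial (Fin n) R} (hP : P.vars.Nonempty)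
    (hI : eval₂ φ x (initial P) ≠ 0) {α : B}
    (hPα : eval₂ φ (Function.update x (mainVar P) α) P = 0)
    (hFα : eval₂ φ (Function.update x (mainVar P) α) F = 0) :
    eval₂ φ x (res1 F P) = 0 := by
  have hdeg := one_le_natDegree_map_toUniv_mainVar (eval₂Hom φ x) hP hI
  have hle := Polynomial.natDegree_map_le (f := eval₂Hom φ x) (p := toUniv (mainVar P) P)
  rw [eval₂_update_eq_eval_toUniv] at hPα hFα
  exact map_resultant_eq_zero_of_eval_eq_zero (eval₂Hom φ x) (by omega) hFα hPα

lemma exists_eval₂_update_mainVar_eq_zero [IsAlgClosed L] (φ : R →+* L) (x : Fin n → L)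
    {P : MvPolynomial (Fin n) R} (hP : P.vars.Nonempty) (hI : eval₂ φ x (initial P) ≠ 0) :
    ∃ α : L, eval₂ φ (Function.update x (mainVar P) α) P = 0 := by
  have hdeg := one_le_natDegree_map_toUniv_mainVar (eval₂Hom φ x) hP hI
  obtain ⟨α, hα⟩ := IsAlgClosed.exists_root _
    (Polynomial.natDegree_pos_iff_degree_pos.mp hdeg).ne'
  exact ⟨α, by rwa [eval₂_update_eq_eval_toUniv]⟩

theorem IsRegularChain.exists_eval₂_eq_zero_and_ne_zero [IsAlgClosed L] (φ : R →+* L)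
    (hφ : Function.Injective φ) :
    ∀ {r : ℕ} {T : Fin r → MvPolynomial (Fin n) R}, IsRegularChain T →
      ∀ Hs : List (MvPolynomial (Fin n) R), (∀ H ∈ Hs, sres H (List.ofFn T).reverse ≠ 0) →
        ∃ x : Fin n → L, (∀ i, eval₂ φ x (T i) = 0) ∧ ∀ H ∈ Hs, eval₂ φ x H ≠ 0
  | 0, _, _, Hs, hHs => by
    obtain ⟨x, hx⟩ := exists_forall_eval₂_ne_zero φ hφ Hs (by simpa [sres] using hHs)
    exact ⟨x, fun i => i.elim0, hx⟩
  | r + 1, T, hT, Hs, hHs => by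
    set P := T (Fin.last r)
    have hP : P.vars.Nonempty := hT.1.1 _
    obtain ⟨x, hxT, hxI, hxH⟩ : ∃ x : Fin n → L, (∀ i : Fin r, eval₂ φ x (T i.castSucc) = 0) ∧
        eval₂ φ x (initial P) ≠ 0 ∧ ∀ H ∈ Hs, eval₂ φ x (res1 H P) ≠ 0 := by
      simpa using exists_eval₂_eq_zero_and_ne_zero φ hφ hT.castSucc
        (initial P :: Hs.map (res1 · P)) <| List.forall_mem_cons.mpr
          ⟨hT.sres_initial_last_ne_zero, List.forall_mem_map.mpr fun H hH => by
            rw [← sres_ofFn_reverse_succ]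
            exact hHs H hH⟩
    obtain ⟨α, hα⟩ := exists_eval₂_update_mainVar_eq_zero φ x hP hxI
    refine ⟨Function.update x (mainVar P) α, Fin.lastCases hα fun i => ?_,
      fun H hH hHα => hxH H hH (eval₂_res1_eq_zero_of_eval₂_update φ x hP hxI hα hHα)⟩
    rw [eval₂_update_of_notMem_vars φ x α (hT.mainVar_last_notMem_vars i)]
    exact hxT i

end Zeros

/-- If `[T, H]` is a regular system in `K[U][X]` (i.e. `T` is a regular chain and
`res(H, T) ≠ 0`), then `V_{K̄(U)}(T \ H)` is nonempty: `T` has a common zero over the algebraic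
closure of `K(U)` at which `H` does not vanish. -/
theorem stmt9 [NeZero n] {r : ℕ}
    (T : Fin r → MvPolynomial (Fin n) (MvPolynomial (Fin d) K))
    (H : MvPolynomial (Fin n) (MvPolynomial (Fin d) K))
    (hT : IsRegularChain T)
    (hres : sres H (List.ofFn T).reverse ≠ 0) :
    ∃ x : Fin n → AlgebraicClosure (FractionRing (MvPolynomial (Fin d) K)),
      (∀ i, evalGeneric x (T i) = 0) ∧ evalGeneric x H ≠ 0 := by
  have hφ : Function.Injective
      ((algebraMap (FractionRing (MvPolynomial (Fin d) K))
          (AlgebraicClosure (FractionRing (MvPolynomial (Fin d) K)))).comp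
        (algebraMap (MvPolynomial (Fin d) K) (FractionRing (MvPolynomial (Fin d) K)))) :=
    (algebraMap (FractionRing (MvPolynomial (Fin d) K)) _).injective.comp
      (IsFractionRing.injective (MvPolynomial (Fin d) K) _)
  obtain ⟨x, hxT, hxH⟩ := hT.exists_eval₂_eq_zero_and_ne_zero _ hφ [H] (by simpa using hres)
  refine ⟨x, fun i => ?_, ?_⟩ <;> rw [evalGeneric, eval_map]
  · exact hxT i
  · exact hxH H List.mem_cons_self

end
end
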